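/- Fix n, m ∈ ℕ, R > 0, signs ε : Fin m → ℝ with ε i ∈ {−1, 1}, and real n × n matrices Z₁, …, Z_m. For any choice of nonzero real n × n matrices A₁, …, A_m such that each A i is row-stochastic (nonnegative entries, rows summing to 1) and erank(A i) ≤ R, it holds that (1/m) * ∑ i, ε i * ⟨A i, Z i⟩ ≤ √(R * n) * (1/m) * ∑ i, ‖Z i‖_op, where ⟨·,·⟩ is the Frobenius inner product and ‖·‖_op the operator norm. -/

import Mathlib

open scoped BigOperators

/-- The singular values of a real square matrix `M`, listed with multiplicity:
the square roots of the eigenvalues of the positive-semidefinite matrix `Mᵀ * M`. -/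
noncomputable def singularValues {n : ℕ} (M : Matrix (Fin n) (Fin n) ℝ) : Fin n → ℝ :=
  fun i => Real.sqrt ((Matrix.isHermitian_conjTranspose_mul_self M).eigenvalues i)

/-- The nuclear (trace) norm of a real square matrix: the sum of its singular values. -/
noncomputable def nuclearNorm {n : ℕ} (M : Matrix (Fin n) (Fin n) ℝ) : ℝ :=
  ∑ i, singularValues M i

/-- The Frobenius norm of a real square matrix. -/
noncomputable def frobeniusNorm {n : ℕ} (M : Matrix (Fin n) (Fin n) ℝ) : ℝ :=
  Real.sqrt (∑ i, ∑ j, (M i j) ^ 2)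

/-- The operator (spectral) norm of a real square matrix: its largest singular value. -/
noncomputable def opNorm {n : ℕ} (M : Matrix (Fin n) (Fin n) ℝ) : ℝ :=
  ⨆ i, singularValues M i

/-- The effective rank of a real square matrix: `exp` of the Shannon entropy of the
distribution obtained by normalizing the singular values.
(In Lean, `Real.log 0 = 0`, so the convention `0 * log 0 = 0` holds automatically.) -/
noncomputable def erank {n : ℕ} (M : Matrix (Fin n) (Fin n) ℝ) : ℝ :=
  Real.exp (-∑ i, (singularValues M i / ∑ j, singularValues M j) *
      Real.log (singularValues M i / ∑ j, singularValues M j))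

/-!
In an orthonormal eigenbasis `(bᵢ)` of `AᵀA` the Frobenius pairing splits as
`⟨A, Z⟩ = ∑ᵢ ⟨A bᵢ, Z bᵢ⟩` with `‖A bᵢ‖ = σᵢ(A)` and `‖Z bᵢ‖ ≤ ‖Z‖_op`, which gives trace duality
`|⟨A, Z⟩| ≤ ‖A‖_* ‖Z‖_op`. For `pᵢ = σᵢ(A) / ‖A‖_*`, Jensen's inequality for `exp` at the points
`log pᵢ` gives `1 / erank A = exp (∑ pᵢ log pᵢ) ≤ ∑ pᵢ²`, that is `‖A‖_*² ≤ erank A · ‖A‖_F²`.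
A row-stochastic matrix has entries in `[0, 1]`, so `‖A‖_F² ≤ ∑ⱼₖ Aⱼₖ = n`. Hence every term
`εᵢ ⟨Aᵢ, Zᵢ⟩` is at most `√(R n) ‖Zᵢ‖_op`.
-/

open Matrix Real

section DotProduct

variable {ι : Type*} [Fintype ι]

theorem dotProduct_sq_le_dotProduct_self_mul (x y : ι → ℝ) :
    (x ⬝ᵥ y) ^ 2 ≤ (x ⬝ᵥ x) * (y ⬝ᵥ y) := by
  simpa only [dotProduct, sq] using Finset.sum_mul_sq_le_sq_mul_sq Finset.univ x y

theorem OrthonormalBasis.dotProduct_self (b : OrthonormalBasis ι ℝ (EuclideanSpace ℝ ι))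
    (i : ι) : ⇑(b i) ⬝ᵥ ⇑(b i) = 1 := by
  have h := real_inner_self_eq_norm_sq (b i)
  rw [b.orthonormal.1 i, one_pow] at h
  rwa [EuclideanSpace.inner_eq_star_dotProduct, star_trivial] at h

theorem OrthonormalBasis.sum_dotProduct_mul_dotProduct
    (b : OrthonormalBasis ι ℝ (EuclideanSpace ℝ ι)) (x y : ι → ℝ) :
    ∑ i, (x ⬝ᵥ ⇑(b i)) * (y ⬝ᵥ ⇑(b i)) = x ⬝ᵥ y := by
  simpa [EuclideanSpace.inner_eq_star_dotProduct, dotProduct_comm] using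
    b.sum_inner_mul_inner (WithLp.toLp 2 x) (WithLp.toLp 2 y)

theorem Matrix.sum_mul_eq_sum_mulVec_dotProduct_mulVec {m : Type*} [Fintype m]
    (b : OrthonormalBasis ι ℝ (EuclideanSpace ℝ ι)) (A Z : Matrix m ι ℝ) :
    ∑ j, ∑ k, A j k * Z j k = ∑ i, (A *ᵥ ⇑(b i)) ⬝ᵥ (Z *ᵥ ⇑(b i)) :=
  calc ∑ j, ∑ k, A j k * Z j k = ∑ j, ∑ i, (A *ᵥ ⇑(b i)) j * (Z *ᵥ ⇑(b i)) j :=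
        Finset.sum_congr rfl fun j _ => (b.sum_dotProduct_mul_dotProduct (A j) (Z j)).symm
    _ = _ := Finset.sum_comm

theorem Matrix.mulVec_dotProduct_mulVec_self {m : Type*} [Fintype m] (A : Matrix m ι ℝ)
    (x : ι → ℝ) : (A *ᵥ x) ⬝ᵥ (A *ᵥ x) = x ⬝ᵥ (Aᴴ * A) *ᵥ x := by
  rw [← mulVec_mulVec, conjTranspose_eq_transpose_of_trivial, dotProduct_mulVec x,
    vecMul_transpose]

end DotProduct

namespace Matrix.IsHermitian

variable {ι : Type*} [Fintype ι] [DecidableEq ι] {H : Matrix ι ι ℝ}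

theorem dotProduct_mulVec_eq_sum (hH : H.IsHermitian) (x : ι → ℝ) :
    x ⬝ᵥ H *ᵥ x = ∑ i, hH.eigenvalues i * (x ⬝ᵥ ⇑(hH.eigenvectorBasis i)) ^ 2 := by
  rw [← hH.eigenvectorBasis.sum_dotProduct_mul_dotProduct x (H *ᵥ x)]
  refine Finset.sum_congr rfl fun i _ => ?_
  rw [dotProduct_comm (H *ᵥ x), dotProduct_mulVec, ← mulVec_transpose,
    ← conjTranspose_eq_transpose_of_trivial, hH.eq, hH.mulVec_eigenvectorBasis, smul_dotProduct,
    smul_eq_mul, dotProduct_comm _ x]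
  ring

theorem dotProduct_mulVec_le (hH : H.IsHermitian) {c : ℝ} (hc : ∀ i, hH.eigenvalues i ≤ c)
    (x : ι → ℝ) : x ⬝ᵥ H *ᵥ x ≤ c * (x ⬝ᵥ x) := by
  rw [hH.dotProduct_mulVec_eq_sum, ← hH.eigenvectorBasis.sum_dotProduct_mul_dotProduct x x,
    Finset.mul_sum]
  exact Finset.sum_le_sum fun i _ => by
    rw [← sq]; exact mul_le_mul_of_nonneg_right (hc i) (sq_nonneg _)

theorem eigenvectorBasis_dotProduct_mulVec (hH : H.IsHermitian) (i : ι) :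
    ⇑(hH.eigenvectorBasis i) ⬝ᵥ H *ᵥ ⇑(hH.eigenvectorBasis i) = hH.eigenvalues i := by
  rw [hH.mulVec_eigenvectorBasis, dotProduct_smul, smul_eq_mul,
    OrthonormalBasis.dotProduct_self, mul_one]

end Matrix.IsHermitian

section Entropy

variable {ι : Type*} [Fintype ι]

theorem Real.exp_sum_mul_log_le_sum_sq {p : ι → ℝ} (h0 : ∀ i, 0 ≤ p i) (h1 : ∑ i, p i = 1) :
    exp (∑ i, p i * log (p i)) ≤ ∑ i, p i ^ 2 := by
  have hjensen := convexOn_exp.map_sum_le (t := Finset.univ) (p := fun i => log (p i))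
    (fun i _ => h0 i) h1 (fun _ _ => Set.mem_univ _)
  have hterm : ∀ i, p i * exp (log (p i)) = p i ^ 2 := fun i => by
    rcases (h0 i).eq_or_lt with h | h
    · simp [← h]
    · rw [exp_log h, sq]
  simpa only [smul_eq_mul, hterm] using hjensen

theorem sq_sum_le_exp_entropy_mul_sum_sq {σ : ι → ℝ} (hσ : ∀ i, 0 ≤ σ i) :
    (∑ i, σ i) ^ 2 ≤
      exp (-∑ i, (σ i / ∑ j, σ j) * log (σ i / ∑ j, σ j)) * ∑ i, σ i ^ 2 := by
  set S := ∑ j, σ j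
  have hS0 : 0 ≤ S := Finset.sum_nonneg fun i _ => hσ i
  rcases hS0.eq_or_lt with hS | hS
  · rw [← hS, sq, zero_mul]; positivity
  have hp := exp_sum_mul_log_le_sum_sq (p := fun i => σ i / S)
    (fun i => div_nonneg (hσ i) hS.le) (by rw [← Finset.sum_div, div_self hS.ne'])
  rw [Real.exp_neg, ← div_eq_inv_mul, le_div_iff₀ (exp_pos _)]
  calc S ^ 2 * exp (∑ i, σ i / S * log (σ i / S))
      ≤ S ^ 2 * ∑ i, (σ i / S) ^ 2 := by gcongr
    _ = ∑ i, σ i ^ 2 := by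
      simp only [div_pow, ← Finset.sum_div]
      field_simp

end Entropy

section SingularValues

variable {n : ℕ}

theorem singularValues_nonneg (M : Matrix (Fin n) (Fin n) ℝ) (i : Fin n) :
    0 ≤ singularValues M i :=
  sqrt_nonneg _

theorem sq_singularValues (M : Matrix (Fin n) (Fin n) ℝ) (i : Fin n) :
    singularValues M i ^ 2 = (isHermitian_conjTranspose_mul_self M).eigenvalues i :=
  sq_sqrt (eigenvalues_conjTranspose_mul_self_nonneg M i)

theorem singularValues_le_opNorm (M : Matrix (Fin n) (Fin n) ℝ) (i : Fin n) :
    singularValues M i ≤ opNorm M :=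
  le_ciSup (Set.finite_range _).bddAbove i

theorem opNorm_nonneg (M : Matrix (Fin n) (Fin n) ℝ) : 0 ≤ opNorm M := by
  rcases isEmpty_or_nonempty (Fin n) with h | ⟨⟨i⟩⟩
  · simp [opNorm, Real.iSup_of_isEmpty]
  · exact (singularValues_nonneg M i).trans (singularValues_le_opNorm M i)

theorem sum_sq_singularValues (M : Matrix (Fin n) (Fin n) ℝ) :
    ∑ i, singularValues M i ^ 2 = ∑ j, ∑ k, M j k ^ 2 := by
  have htrace := (isHermitian_conjTranspose_mul_self M).trace_eq_sum_eigenvalues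
  simp only [RCLike.ofReal_real_eq_id, id] at htrace
  simp only [sq_singularValues, ← htrace, trace, diag, mul_apply, conjTranspose_apply,
    star_trivial, ← sq]
  exact Finset.sum_comm

theorem mulVec_dotProduct_mulVec_self_le (Z : Matrix (Fin n) (Fin n) ℝ) (x : Fin n → ℝ) :
    (Z *ᵥ x) ⬝ᵥ (Z *ᵥ x) ≤ opNorm Z ^ 2 * (x ⬝ᵥ x) := by
  rw [mulVec_dotProduct_mulVec_self]
  refine (isHermitian_conjTranspose_mul_self Z).dotProduct_mulVec_le (fun i => ?_) x
  rw [← sq_singularValues]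
  exact pow_le_pow_left₀ (singularValues_nonneg Z i) (singularValues_le_opNorm Z i) 2

theorem abs_sum_mul_le_nuclearNorm_mul_opNorm (A Z : Matrix (Fin n) (Fin n) ℝ) :
    |∑ j, ∑ k, A j k * Z j k| ≤ nuclearNorm A * opNorm Z := by
  set hA := isHermitian_conjTranspose_mul_self A
  rw [sum_mul_eq_sum_mulVec_dotProduct_mulVec hA.eigenvectorBasis, nuclearNorm, Finset.sum_mul]
  refine (Finset.abs_sum_le_sum_abs _ _).trans (Finset.sum_le_sum fun i _ => ?_)
  set b := ⇑(hA.eigenvectorBasis i)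
  refine abs_le_of_sq_le_sq ?_ (mul_nonneg (singularValues_nonneg A i) (opNorm_nonneg Z))
  calc ((A *ᵥ b) ⬝ᵥ (Z *ᵥ b)) ^ 2 ≤ ((A *ᵥ b) ⬝ᵥ (A *ᵥ b)) * ((Z *ᵥ b) ⬝ᵥ (Z *ᵥ b)) :=
        dotProduct_sq_le_dotProduct_self_mul _ _
    _ ≤ singularValues A i ^ 2 * (opNorm Z ^ 2 * (b ⬝ᵥ b)) := by
        rw [mulVec_dotProduct_mulVec_self A, hA.eigenvectorBasis_dotProduct_mulVec,
          sq_singularValues]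
        exact mul_le_mul_of_nonneg_left (mulVec_dotProduct_mulVec_self_le Z b)
          (eigenvalues_conjTranspose_mul_self_nonneg A i)
    _ = (singularValues A i * opNorm Z) ^ 2 := by
        rw [OrthonormalBasis.dotProduct_self, mul_one, mul_pow]

theorem nuclearNorm_sq_le_erank_mul_sum_sq (A : Matrix (Fin n) (Fin n) ℝ) :
    nuclearNorm A ^ 2 ≤ erank A * ∑ j, ∑ k, A j k ^ 2 := by
  rw [← sum_sq_singularValues]
  exact sq_sum_le_exp_entropy_mul_sum_sq (singularValues_nonneg A)

end SingularValues

theorem sum_sq_le_card_of_mem_rowStochastic {ι : Type*} [Fintype ι] [DecidableEq ι]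
    {A : Matrix ι ι ℝ} (hA : A ∈ rowStochastic ℝ ι) :
    ∑ i, ∑ j, A i j ^ 2 ≤ Fintype.card ι :=
  calc ∑ i, ∑ j, A i j ^ 2 ≤ ∑ i, ∑ j, A i j :=
        Finset.sum_le_sum fun i _ => Finset.sum_le_sum fun j _ =>
          pow_le_of_le_one (nonneg_of_mem_rowStochastic hA) (le_one_of_mem_rowStochastic hA)
            two_ne_zero
    _ = Fintype.card ι := by simp [sum_row_of_mem_rowStochastic hA]

theorem nuclearNorm_le_sqrt_of_mem_rowStochastic {n : ℕ} {A : Matrix (Fin n) (Fin n) ℝ}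
    (hA : A ∈ rowStochastic ℝ (Fin n)) {R : ℝ} (hR : erank A ≤ R) :
    nuclearNorm A ≤ √(R * n) := by
  refine le_sqrt_of_sq_le ((nuclearNorm_sq_le_erank_mul_sum_sq A).trans ?_)
  have hcard := sum_sq_le_card_of_mem_rowStochastic hA
  rw [Fintype.card_fin] at hcard
  exact mul_le_mul hR hcard (by positivity) ((exp_pos _).le.trans hR)

theorem rademacher_sum_le_sqrt_erank_dim_mul_opNorms_general {n m : ℕ} (R : ℝ)
    (ε : Fin m → ℝ) (hε : ∀ i, ε i = -1 ∨ ε i = 1)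
    (Z A : Fin m → Matrix (Fin n) (Fin n) ℝ)
    (hpos : ∀ i j k, 0 ≤ A i j k) (hrow : ∀ i j, ∑ k, A i j k = 1)
    (herank : ∀ i, erank (A i) ≤ R) :
    (1 / (m : ℝ)) * ∑ i, ε i * (∑ j, ∑ k, A i j k * Z i j k) ≤
      Real.sqrt (R * n) * ((1 / (m : ℝ)) * ∑ i, opNorm (Z i)) := by
  have hterm (i : Fin m) :
      ε i * ∑ j, ∑ k, A i j k * Z i j k ≤ √(R * n) * opNorm (Z i) :=
    calc ε i * ∑ j, ∑ k, A i j k * Z i j k ≤ |∑ j, ∑ k, A i j k * Z i j k| := by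
          rcases hε i with h | h <;> simp [h, neg_le_abs, le_abs_self]
      _ ≤ nuclearNorm (A i) * opNorm (Z i) := abs_sum_mul_le_nuclearNorm_mul_opNorm _ _
      _ ≤ √(R * n) * opNorm (Z i) :=
          mul_le_mul_of_nonneg_right (nuclearNorm_le_sqrt_of_mem_rowStochastic
            (mem_rowStochastic_iff_sum.2 ⟨hpos i, hrow i⟩) (herank i)) (opNorm_nonneg _)
  calc (1 / (m : ℝ)) * ∑ i, ε i * (∑ j, ∑ k, A i j k * Z i j k)
      ≤ (1 / (m : ℝ)) * ∑ i, √(R * n) * opNorm (Z i) :=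
        mul_le_mul_of_nonneg_left (Finset.sum_le_sum fun i _ => hterm i) (by positivity)
    _ = √(R * n) * ((1 / (m : ℝ)) * ∑ i, opNorm (Z i)) := by
        rw [← Finset.mul_sum]
        ring

/-- **Rademacher-sum bound for row-stochastic matrices of bounded effective rank.**
For signs `ε i ∈ {−1, 1}`, matrices `Z i`, and nonzero row-stochastic matrices `A i`
with `erank (A i) ≤ R`,
`(1/m) * ∑ i, ε i * ⟨A i, Z i⟩ ≤ √(R * n) * (1/m) * ∑ i, ‖Z i‖_op`. -/
theorem rademacher_sum_le_sqrt_erank_dim_mul_opNorms {n m : ℕ} (R : ℝ) (hR : 0 < R)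
    (ε : Fin m → ℝ) (hε : ∀ i, ε i = -1 ∨ ε i = 1)
    (Z A : Fin m → Matrix (Fin n) (Fin n) ℝ)
    (hA : ∀ i, A i ≠ 0)
    (hpos : ∀ i j k, 0 ≤ A i j k) (hrow : ∀ i j, ∑ k, A i j k = 1)
    (herank : ∀ i, erank (A i) ≤ R) :
    (1 / (m : ℝ)) * ∑ i, ε i * (∑ j, ∑ k, A i j k * Z i j k) ≤
      Real.sqrt (R * n) * ((1 / (m : ℝ)) * ∑ i, opNorm (Z i)) :=
  rademacher_sum_le_sqrt_erank_dim_mul_opNorms_general R ε hε Z A hpos hrow herank
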